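/- Unweighted rooted corollary: Let D be a digraph with every vertex weight and arc weight equal to 1, and let e_* = (w_*, v_*) be a fixed arc of D. Then the number of spanning trees of the middle digraph M(D) rooted at the vertex e_* equals t(D, w_*) · (1 + d_{v_*})^{r_{v_*} − 1} · Π_{v ≠ v_*} (1 + d_v)^{r_v}, where t(D, w_*) is the number of spanning trees of D rooted at w_*, and d_v, r_v are the outdegree and indegree of v in D. -/

import Mathlib

/-!
Matrix-tree theorem: row `u ≠ r` of the Laplacian is `∑ χ(u, v) (e_u - e_v)` over the arcs
`(u, v)`, so by multilinearity `det` of the Laplacian with row `r` replaced by `e_r` is a sum over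
maps `F` choosing one out-neighbour per vertex. The determinant of the term for `F` is `1` if
every `F`-orbit reaches `r` and `0` otherwise, and those `F` are exactly the spanning trees.

For `M(D)` rooted at `e⋆ = (w⋆, v⋆)` that matrix is `[[diag d, -T], [-H, Λ - H T]]`, with `T`
the tail incidence matrix, `H` the head incidence matrix without the row of `e⋆`, and
`Λ = diag (1 + d_{h(e)})` (with `1` at `e⋆`). As `Λ H = H (1 + diag d)`, it factors as
`[[1, 0], [H, Λ]] * [[diag d, -T], [-H, 1]]`, so its determinant is `det Λ * det (diag d - T H)`.
Here `diag d - T H` is the Laplacian of `D` plus a `1` at `(w⋆, v⋆)`; since the Laplacian has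
zero row sums, its determinant equals that of the Laplacian with row `w⋆` replaced by `e_{w⋆}`,
which is `t(D, w⋆)`.
-/

open scoped Classical BigOperators

section Digraph

variable {V : Type*} [Fintype V] [DecidableEq V]

/-- `T` is a spanning in-tree (arborescence toward the root) of the digraph
with arc set containing `T`, rooted at `r`: every vertex other than `r` has
exactly one outgoing arc in `T`, the root has none, and `T` has no directed cycle. -/
def IsSpTree (T : Finset (V × V)) (r : V) : Prop :=
  (∀ v : V, v ≠ r → ∃! a : V × V, a ∈ T ∧ a.1 = v) ∧
  (∀ a ∈ T, a.1 ≠ r) ∧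
  (∀ (v : V) (l : List V), ¬ List.Chain (fun a b => (a, b) ∈ T) v (l ++ [v]))

/-- The set of spanning trees of the digraph with arc set `arcs`, rooted at `r`. -/
noncomputable def trees (arcs : Finset (V × V)) (r : V) : Finset (Finset (V × V)) :=
  arcs.powerset.filter (fun T => IsSpTree T r)

/-- Edge-weighted complexity with root `r`: `κ^{edge}(D, r, χ)`. -/
noncomputable def kappaEdgeRooted (arcs : Finset (V × V)) (χ : V × V → ℝ) (r : V) : ℝ :=
  ∑ T ∈ trees arcs r, ∏ a ∈ T, χ a

/-- Total edge-weighted complexity `κ^{edge}(D, χ)` (over all roots). -/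
noncomputable def kappaEdge (arcs : Finset (V × V)) (χ : V × V → ℝ) : ℝ :=
  ∑ r : V, kappaEdgeRooted arcs χ r

/-- Vertex-weighted complexity with root `r`: `κ^{vertex}(D, r, χ)`. -/
noncomputable def kappaVertexRooted (arcs : Finset (V × V)) (χv : V → ℝ) (r : V) : ℝ :=
  ∑ T ∈ trees arcs r, ∏ a ∈ T, χv a.2

/-- Total vertex-weighted complexity `κ^{vertex}(D, χ)` (over all roots). -/
noncomputable def kappaVertex (arcs : Finset (V × V)) (χv : V → ℝ) : ℝ :=
  ∑ r : V, kappaVertexRooted arcs χv r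

/-- Weighted adjacency matrix `W`: `W_{ij} = χ_{ij}` if `(i,j)` is an arc, else `0`. -/
def adjW (arcs : Finset (V × V)) (χ : V × V → ℝ) : Matrix V V ℝ :=
  fun i j => if (i, j) ∈ arcs then χ (i, j) else 0

/-- Edge-weighted Laplacian `Δ^{edge}`. -/
def lapEdge (arcs : Finset (V × V)) (χ : V × V → ℝ) : Matrix V V ℝ :=
  fun i j => if i = j then ∑ k ∈ Finset.univ.erase i, adjW arcs χ i k
             else - adjW arcs χ i j

/-- Vertex-weighted Laplacian `Δ^{vertex}`. -/
noncomputable def lapVertex (arcs : Finset (V × V)) (χv : V → ℝ) : Matrix V V ℝ :=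
  fun u v => if u = v then ∑ a ∈ arcs.filter (fun a => a.1 = u), χv a.2
             else if (u, v) ∈ arcs then - χv v else 0

/-- Matrix obtained by deleting the row and column indexed by `v`. -/
def minorAt (A : Matrix V V ℝ) (v : V) : Matrix {u : V // u ≠ v} {u : V // u ≠ v} ℝ :=
  A.submatrix (fun u => (u : V)) (fun u => (u : V))

/-- Out-degree of `v`. -/
def outdeg (arcs : Finset (V × V)) (v : V) : ℕ := (arcs.filter (fun a => a.1 = v)).card

/-- In-degree of `v`. -/
def indeg (arcs : Finset (V × V)) (v : V) : ℕ := (arcs.filter (fun a => a.2 = v)).card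

/-- Weighted out-degree `d_v = Σ_{t(e) = v} χ_e`. -/
noncomputable def wOut (arcs : Finset (V × V)) (χ : V × V → ℝ) (v : V) : ℝ :=
  ∑ a ∈ arcs.filter (fun a => a.1 = v), χ a

end Digraph

section MiddleDigraph

variable {V : Type*} [Fintype V] [DecidableEq V]

/-- Arc set of the middle digraph `M(D)` on the vertex set `V(D) ⊕ A(D)`:
each arc `e = (u, v)` of `D` is replaced by the directed path `u → e → v`, and
there is an arc `e → f` whenever the head of `e` equals the tail of `f`. -/
noncomputable def midArcs (arcs : Finset (V × V)) :
    Finset ((V ⊕ {a : V × V // a ∈ arcs}) × (V ⊕ {a : V × V // a ∈ arcs})) :=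
  Finset.univ.filter (fun p =>
    match p with
    | (Sum.inl u, Sum.inr e) => (e : V × V).1 = u
    | (Sum.inr e, Sum.inl v) => (e : V × V).2 = v
    | (Sum.inr e, Sum.inr f) => (e : V × V).2 = (f : V × V).1
    | _ => False)

/-- Vertex weights of `M(D)`: vertices coming from `V(D)` keep their vertex weight,
and the vertex corresponding to an arc `e` gets the arc weight `χ_e`. -/
noncomputable def midWeight (arcs : Finset (V × V)) (χv : V → ℝ) (χ : V × V → ℝ) :
    V ⊕ {a : V × V // a ∈ arcs} → ℝ :=
  Sum.elim χv (fun e => χ (e : V × V))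

end MiddleDigraph

open Matrix Finset

theorem det_updateRow_eq_of_sum_eq {n R : Type*} [Fintype n] [DecidableEq n] [CommRing R]
    [IsDomain R] {M : Matrix n n R} (hM : ∀ i, ∑ j, M i j = 0) (i : n) {x y : n → R}
    (hxy : ∑ j, x j = ∑ j, y j) : (updateRow M i x).det = (updateRow M i y).det := by
  have hzero : (updateRow M i (x - y)).det = 0 := by
    refine exists_mulVec_eq_zero_iff.1 ⟨fun _ => 1, fun h => one_ne_zero (congrFun h i), ?_⟩
    ext k
    by_cases hk : k = i
    · simp [hk, mulVec, dotProduct, sum_sub_distrib, hxy]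
    · simp [hk, mulVec, dotProduct, hM]
  have := det_updateRow_add M i (x - y) y
  rwa [sub_add_cancel, hzero, zero_add] at this

theorem det_fromBlocks_neg_of_mul_eq {m n R : Type*} [Fintype m] [Fintype n] [DecidableEq m]
    [DecidableEq n] [CommRing R] {A : Matrix m m R} {B : Matrix m n R} {H : Matrix n m R}
    {Λ : Matrix n n R} (h : Λ * H = H + H * A) :
    (fromBlocks A (-B) (-H) (Λ - H * B)).det = Λ.det * (A - B * H).det := by
  have hfactor :
      fromBlocks A (-B) (-H) (Λ - H * B) = fromBlocks 1 0 H Λ * fromBlocks A (-B) (-H) 1 := by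
    rw [fromBlocks_multiply]
    congr 1 <;> simp [h, sub_eq_add_neg, add_comm]
  rw [hfactor, det_mul, det_fromBlocks_zero₁₂, det_one, one_mul, det_fromBlocks_one₂₂,
    Matrix.neg_mul, Matrix.mul_neg, neg_neg]

theorem prod_erase_snd_eq_pow_indeg {V M : Type*} [Fintype V] [DecidableEq V] [CommMonoid M]
    {arcs : Finset (V × V)} {e : V × V} (he : e ∈ arcs) (f : V → M) :
    ∏ a ∈ arcs.erase e, f a.2 =
      f e.2 ^ (indeg arcs e.2 - 1) * ∏ v ∈ univ.erase e.2, f v ^ indeg arcs v := by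
  have hfiber : ∀ v, ∏ a ∈ (arcs.erase e).filter (fun a => a.2 = v), f a.2 =
      f v ^ (if v = e.2 then indeg arcs v - 1 else indeg arcs v) := by
    intro v
    rw [prod_congr rfl fun a ha => by rw [(mem_filter.1 ha).2], prod_const, filter_erase, indeg]
    split_ifs with hv
    · rw [card_erase_of_mem (mem_filter.2 ⟨he, hv.symm⟩)]
    · rw [erase_eq_of_notMem fun h => hv (mem_filter.1 h).2.symm]
  rw [← prod_fiberwise (arcs.erase e) Prod.snd, prod_congr rfl fun v _ => hfiber v,
    ← mul_prod_erase univ _ (mem_univ e.2), if_pos rfl]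
  exact congrArg _ (prod_congr rfl fun v hv => by rw [if_neg (ne_of_mem_erase hv)])

theorem card_filter_attach {α : Type*} (s : Finset α) (p : α → Prop) [DecidablePred p] :
    #(s.attach.filter fun a => p a.1) = #(s.filter p) := by
  rw [filter_attach, card_map, card_attach]

section FunctionalDigraph

variable {V : Type*}

def FlowsTo (F : V → V) (r : V) : Prop := ∀ u, ∃ k, F^[k] u = r

variable [DecidableEq V] {F : V → V} {r : V}

def rootedFunLaplacian (F : V → V) (r : V) : Matrix V V ℝ :=
  fun u => if u = r then Pi.single r 1 else Pi.single u 1 - Pi.single (F u) 1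

theorem rootedFunLaplacian_apply_ne_zero {u v : V} (huv : u ≠ v)
    (h : rootedFunLaplacian F r u v ≠ 0) : u ≠ r ∧ F u = v := by
  by_cases hu : u = r
  · subst hu
    simp [rootedFunLaplacian, Ne.symm huv] at h
  · by_contra hF
    simp_all [rootedFunLaplacian, eq_comm]

theorem rootedFunLaplacian_apply_self (hF : FlowsTo F r) (u : V) :
    rootedFunLaplacian F r u u = 1 := by
  by_cases hu : u = r
  · simp [rootedFunLaplacian, hu]
  · have hfix : F u ≠ u := fun hfix => by
      obtain ⟨k, hk⟩ := hF u
      exact hu (Function.iterate_fixed hfix k ▸ hk)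
    simp [rootedFunLaplacian, hu, hfix]

theorem eq_one_of_prod_rootedFunLaplacian_ne_zero (hF : FlowsTo F r) {π : Equiv.Perm V}
    (hπ : ∀ u, rootedFunLaplacian F r (π u) u ≠ 0) : π = 1 := by
  -- the points moved by `π` avoid `r` and are permuted by `F` (as `π⁻¹`)
  have step : ∀ x, π x ≠ x → x ≠ r ∧ π (F x) ≠ F x := by
    intro x hx
    have hxy : x ≠ π.symm x := fun h => hx (by simpa using congrArg π h)
    obtain ⟨hxr, hFx⟩ := rootedFunLaplacian_apply_ne_zero hxy (by simpa using hπ (π.symm x))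
    exact ⟨hxr, by rwa [hFx, Equiv.apply_symm_apply]⟩
  by_contra hπ1
  obtain ⟨w, hw⟩ : ∃ w, π w ≠ w := by
    by_contra! h
    exact hπ1 (Equiv.ext h)
  have orbit : ∀ k, π (F^[k] w) ≠ F^[k] w := by
    intro k
    induction k with
    | zero => exact hw
    | succ k ih => simpa [Function.iterate_succ_apply'] using (step _ ih).2
  obtain ⟨k, hk⟩ := hF w
  exact (step _ (orbit k)).1 hk

variable [Fintype V]

def funArcs (F : V → V) (r : V) : Finset (V × V) :=
  (univ.erase r).image fun u => (u, F u)

@[simp]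
theorem mem_funArcs {u v : V} : (u, v) ∈ funArcs F r ↔ u ≠ r ∧ v = F u := by
  simp [funArcs, eq_comm]

theorem iterate_of_isChain_funArcs {x y : V} {l : List V}
    (h : (x :: (l ++ [y])).IsChain fun a b => (a, b) ∈ funArcs F r) :
    F^[l.length + 1] x = y ∧ ∀ i ≤ l.length, F^[i] x ≠ r := by
  induction l generalizing x with
  | nil =>
    have : x ≠ r ∧ y = F x := by simpa using h
    exact ⟨this.2.symm, fun i hi => by simp_all⟩
  | cons b l ih =>
    obtain ⟨hxb, hc⟩ := List.isChain_cons_cons.1 h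
    obtain ⟨hx, rfl⟩ := mem_funArcs.1 hxb
    obtain ⟨hy, hl⟩ := ih hc
    refine ⟨by simpa using hy, ?_⟩
    rintro (_ | i) hi
    · exact hx
    · simpa using hl i (by simpa using hi)

theorem iterate_ne_of_isChain_funArcs {v : V} {l : List V}
    (h : (v :: (l ++ [v])).IsChain fun a b => (a, b) ∈ funArcs F r) (k : ℕ) :
    F^[k] v ≠ r := by
  obtain ⟨hper, hne⟩ := iterate_of_isChain_funArcs h
  rw [← (show Function.IsPeriodicPt F _ v from hper).iterate_mod_apply k]
  exact hne _ (Nat.lt_succ_iff.mp (Nat.mod_lt _ l.length.succ_pos))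

theorem isChain_funArcs_iterate {x : V} {n : ℕ} (h : ∀ i < n, F^[i] x ≠ r) :
    (x :: List.iterate F (F x) n).IsChain fun a b => (a, b) ∈ funArcs F r := by
  induction n generalizing x with
  | zero => simp
  | succ n ih =>
    rw [List.iterate, List.isChain_cons_cons]
    exact ⟨by simpa using h 0 n.succ_pos, ih fun i hi => by simpa using h (i + 1) (by omega)⟩

theorem exists_isChain_funArcs {v : V} (hv : ∀ k, F^[k] v ≠ r) :
    ∃ y l, (y :: (l ++ [y])).IsChain fun a b => (a, b) ∈ funArcs F r := by
  obtain ⟨m, n, hmn, heq⟩ := Finite.exists_ne_map_eq_of_infinite fun k : ℕ => F^[k] v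
  wlog hlt : m < n generalizing m n
  · exact this n m hmn.symm heq.symm (by omega)
  obtain ⟨p, rfl⟩ := Nat.exists_eq_add_of_lt hlt
  refine ⟨F^[m] v, List.iterate F (F (F^[m] v)) p, ?_⟩
  have hcycle : F^[p] (F (F^[m] v)) = F^[m] v := by
    rw [← Function.iterate_succ_apply, ← Function.iterate_add_apply, heq]
    congr 1
    omega
  have := isChain_funArcs_iterate (F := F) (r := r) (x := F^[m] v) (n := p + 1)
    fun i _ => by simpa [← Function.iterate_add_apply] using hv (i + m)
  rwa [List.iterate_add, hcycle] at this

theorem isSpTree_funArcs_iff : IsSpTree (funArcs F r) r ↔ FlowsTo F r := by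
  constructor
  · rintro ⟨-, -, hacyclic⟩ u
    by_contra! hu
    obtain ⟨y, l, h⟩ := exists_isChain_funArcs hu
    exact hacyclic y l h
  · intro hF
    refine ⟨fun v hv => ⟨(v, F v), by simp [hv], fun a ha => ?_⟩,
      fun a ha => (mem_funArcs.1 ha).1, fun v l h => ?_⟩
    · obtain ⟨u, w⟩ := a
      simp_all
    · obtain ⟨k, hk⟩ := hF v
      exact iterate_ne_of_isChain_funArcs h k hk

theorem det_rootedFunLaplacian_of_flowsTo (hF : FlowsTo F r) :
    (rootedFunLaplacian F r).det = 1 := by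
  rw [det_apply, sum_eq_single 1]
  · simp only [Equiv.Perm.sign_one, Equiv.Perm.one_apply, one_smul]
    exact prod_eq_one fun u _ => rootedFunLaplacian_apply_self hF u
  · intro π _ hπ1
    obtain ⟨u, hu⟩ : ∃ u, rootedFunLaplacian F r (π u) u = 0 := by
      by_contra! h
      exact hπ1 (eq_one_of_prod_rootedFunLaplacian_ne_zero hF h)
    have : ∏ i, rootedFunLaplacian F r (π i) i = 0 := prod_eq_zero (mem_univ u) hu
    rw [this, smul_zero]
  · simp

theorem det_rootedFunLaplacian_of_not_flowsTo (hF : ¬FlowsTo F r) :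
    (rootedFunLaplacian F r).det = 0 := by
  -- the indicator of the vertices that never reach `r` is a kernel vector
  obtain ⟨w, hw⟩ : ∃ w, ∀ k, F^[k] w ≠ r := by simpa [FlowsTo] using hF
  refine exists_mulVec_eq_zero_iff.1 ⟨fun u => if ∀ k, F^[k] u ≠ r then 1 else 0,
    fun h => by simpa [hw] using congrFun h w, ?_⟩
  ext u
  by_cases hu : u = r
  · subst hu
    have hu0 : ∃ k, F^[k] u = u := ⟨0, rfl⟩
    simp [rootedFunLaplacian, mulVec, hu0]
  · have : (∀ k, F^[k] u ≠ r) ↔ ∀ k, F^[k] (F u) ≠ r :=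
      ⟨fun h k => by simpa using h (k + 1), fun h k => by
        cases k with
        | zero => exact hu
        | succ k => simpa using h k⟩
    show rootedFunLaplacian F r u ⬝ᵥ _ = 0
    simp [rootedFunLaplacian, hu, sub_dotProduct, this]

end FunctionalDigraph

section MatrixTree

variable {V : Type*} [Fintype V] [DecidableEq V] (arcs : Finset (V × V)) (χ : V × V → ℝ)

theorem lapEdge_eq_diagonal_sub_adjW :
    lapEdge arcs χ = diagonal (fun u => ∑ v, adjW arcs χ u v) - adjW arcs χ := by
  ext u v
  by_cases h : u = v
  · subst h
    simp [lapEdge, sum_erase_eq_sub]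
  · simp [lapEdge, h]

theorem sum_lapEdge_apply (u : V) : ∑ v, lapEdge arcs χ u v = 0 := by
  simp [lapEdge_eq_diagonal_sub_adjW, sum_sub_distrib, diagonal_apply]

theorem lapEdge_row_eq_sum (u : V) :
    lapEdge arcs χ u =
      ∑ v ∈ univ.filter fun v => (u, v) ∈ arcs,
        χ (u, v) • (Pi.single u 1 - Pi.single v 1) := by
  ext x
  rw [lapEdge_eq_diagonal_sub_adjW]
  simp [Finset.sum_apply, Pi.single_apply, mul_sub, sum_sub_distrib, adjW, sum_filter,
    diagonal_apply, eq_comm (a := x)]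

def succChoices (r : V) : Finset (V → V) :=
  Fintype.piFinset fun u => if u = r then {r} else univ.filter fun v => (u, v) ∈ arcs

variable {arcs} {r : V}

theorem mem_succChoices {F : V → V} :
    F ∈ succChoices arcs r ↔ F r = r ∧ ∀ u, u ≠ r → (u, F u) ∈ arcs := by
  simp only [succChoices, Fintype.mem_piFinset]
  refine ⟨fun h => ⟨by simpa using h r, fun u hu => by simpa [hu] using h u⟩, fun h u => ?_⟩
  by_cases hu : u = r
  · simp [hu, h.1]
  · simp [hu, h.2 u hu]

theorem funArcs_injOn : Set.InjOn (funArcs · r) {F : V → V | F r = r} := by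
  intro F hF G hG h
  funext u
  by_cases hu : u = r
  · rw [hu]
    exact hF.trans hG.symm
  · have h : funArcs F r = funArcs G r := h
    have : (u, F u) ∈ funArcs G r := h ▸ mem_funArcs.2 ⟨hu, rfl⟩
    exact (mem_funArcs.1 this).2

theorem exists_funArcs_eq {T : Finset (V × V)} (hT : IsSpTree T r) :
    ∃ F : V → V, F r = r ∧ funArcs F r = T := by
  let F : V → V := fun u => if h : ∃ a ∈ T, a.1 = u then h.choose.2 else u
  have hF : ∀ u, u ≠ r → (u, F u) ∈ T := by
    intro u hu
    have h : ∃ a ∈ T, a.1 = u := (hT.1 u hu).exists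
    simp only [F, dif_pos h]
    convert h.choose_spec.1 using 1
    exact Prod.ext h.choose_spec.2.symm rfl
  refine ⟨F, dif_neg fun ⟨a, ha, har⟩ => hT.2.1 a ha har, ?_⟩
  ext ⟨u, v⟩
  rw [mem_funArcs]
  constructor
  · rintro ⟨hu, rfl⟩
    exact hF u hu
  · intro huv
    have hu : u ≠ r := hT.2.1 _ huv
    exact ⟨hu, congrArg Prod.snd ((hT.1 u hu).unique ⟨huv, rfl⟩ ⟨hF u hu, rfl⟩)⟩

theorem trees_eq_image :
    trees arcs r = ((succChoices arcs r).filter (FlowsTo · r)).image (funArcs · r) := by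
  ext T
  simp only [trees, mem_filter, mem_powerset, mem_image, mem_succChoices]
  constructor
  · rintro ⟨hsub, hT⟩
    obtain ⟨F, hFr, rfl⟩ := exists_funArcs_eq hT
    exact ⟨F, ⟨⟨hFr, fun u hu => hsub (mem_funArcs.2 ⟨hu, rfl⟩)⟩, isSpTree_funArcs_iff.1 hT⟩, rfl⟩
  · rintro ⟨F, ⟨⟨-, harcs⟩, hF⟩, rfl⟩
    refine ⟨fun ⟨u, v⟩ h => ?_, isSpTree_funArcs_iff.2 hF⟩
    obtain ⟨hu, rfl⟩ := mem_funArcs.1 h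
    exact harcs u hu

theorem kappaEdgeRooted_eq_sum_flowsTo :
    kappaEdgeRooted arcs χ r =
      ∑ F ∈ (succChoices arcs r).filter (FlowsTo · r),
        ∏ u ∈ univ.erase r, χ (u, F u) := by
  rw [kappaEdgeRooted, trees_eq_image, sum_image]
  · exact sum_congr rfl fun F _ => prod_image fun u _ v _ h => congrArg Prod.fst h
  · intro F hF G hG
    exact funArcs_injOn (mem_succChoices.1 (mem_filter.1 hF).1).1
      (mem_succChoices.1 (mem_filter.1 hG).1).1

theorem det_updateRow_lapEdge_eq_sum :
    (updateRow (lapEdge arcs χ) r (Pi.single r 1)).det =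
      ∑ F ∈ succChoices arcs r,
        (∏ u ∈ univ.erase r, χ (u, F u)) * (rootedFunLaplacian F r).det := by
  set S : V → Finset V := fun u => if u = r then {r} else univ.filter fun v => (u, v) ∈ arcs
  set g : V → V → V → ℝ := fun u v =>
    if u = r then Pi.single r 1 else χ (u, v) • (Pi.single u 1 - Pi.single v 1)
  have hrows : updateRow (lapEdge arcs χ) r (Pi.single r 1) = fun u => ∑ v ∈ S u, g u v := by
    funext u
    by_cases hu : u = r
    · simp [S, g, hu]
    · simp [S, g, hu, lapEdge_row_eq_sum]
  have hterm : ∀ F : V → V, (fun u => g u (F u)) =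
      of fun u j => (if u = r then 1 else χ (u, F u)) * rootedFunLaplacian F r u j := by
    intro F
    ext u j
    by_cases hu : u = r <;> simp [g, rootedFunLaplacian, hu]
  have hexpand : det (fun u => ∑ v ∈ S u, g u v) =
      ∑ F ∈ Fintype.piFinset S, det fun u => g u (F u) :=
    detRowAlternating.toMultilinearMap.map_sum_finset g S
  rw [hrows, hexpand]
  refine sum_congr rfl fun F _ => ?_
  rw [hterm, det_mul_column, ← mul_prod_erase univ _ (mem_univ r), if_pos rfl, one_mul,
    prod_congr rfl fun u hu => if_neg (ne_of_mem_erase hu)]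

theorem kappaEdgeRooted_eq_det (r : V) :
    kappaEdgeRooted arcs χ r = (updateRow (lapEdge arcs χ) r (Pi.single r 1)).det := by
  rw [kappaEdgeRooted_eq_sum_flowsTo, det_updateRow_lapEdge_eq_sum, sum_filter]
  refine sum_congr rfl fun F _ => ?_
  by_cases hF : FlowsTo F r
  · rw [if_pos hF, det_rootedFunLaplacian_of_flowsTo hF, mul_one]
  · rw [if_neg hF, det_rootedFunLaplacian_of_not_flowsTo hF, mul_zero]

end MatrixTree

theorem kappaEdgeRooted_one {V : Type*} (arcs : Finset (V × V)) (r : V) :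
    kappaEdgeRooted arcs (fun _ => 1) r = (trees arcs r).card := by
  simp [kappaEdgeRooted]

section MiddleDigraphLaplacian

variable {V : Type*} [DecidableEq V] (arcs : Finset (V × V))

def tailIncidence : Matrix V {a // a ∈ arcs} ℝ := fun u e => if e.1.1 = u then 1 else 0

def headIncidence (a₀ : V × V) : Matrix {a // a ∈ arcs} V ℝ :=
  fun e v => if e.1 ≠ a₀ ∧ e.1.2 = v then 1 else 0

noncomputable def midOutdegDiag (a₀ : V × V) : Matrix {a // a ∈ arcs} {a // a ∈ arcs} ℝ :=
  diagonal fun e => if e.1 = a₀ then 1 else 1 + outdeg arcs e.1.2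

variable {arcs}

theorem tailIncidence_mul_headIncidence_apply (a₀ : V × V) (u v : V) :
    (tailIncidence arcs * headIncidence arcs a₀) u v =
      if (u, v) ∈ arcs ∧ (u, v) ≠ a₀ then 1 else 0 := by
  rw [mul_apply]
  calc ∑ e, tailIncidence arcs u e * headIncidence arcs a₀ e v
      = ∑ a ∈ arcs, if a = (u, v) then (if (u, v) ≠ a₀ then 1 else 0) else 0 := by
        rw [← Finset.sum_coe_sort arcs]
        refine sum_congr rfl fun e _ => ?_
        obtain ⟨⟨x, y⟩, he⟩ := e
        simp only [tailIncidence, headIncidence]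
        split_ifs <;> aesop
    _ = _ := by rw [sum_ite_eq', ite_and]

variable [Fintype V]

theorem midOutdegDiag_mul_headIncidence (a₀ : V × V) :
    midOutdegDiag arcs a₀ * headIncidence arcs a₀ =
      headIncidence arcs a₀ +
        headIncidence arcs a₀ * diagonal fun u => (outdeg arcs u : ℝ) := by
  ext e v
  simp only [midOutdegDiag, diagonal_mul, mul_diagonal, Matrix.add_apply, headIncidence]
  split_ifs <;> simp_all

theorem headIncidence_mul_tailIncidence_apply (a₀ : V × V) (e f : {a // a ∈ arcs}) :
    (headIncidence arcs a₀ * tailIncidence arcs) e f =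
      if e.1 ≠ a₀ ∧ f.1.1 = e.1.2 then 1 else 0 := by
  simp [headIncidence, tailIncidence, mul_apply, eq_comm]

theorem sum_adjW_one (u : V) : ∑ v, adjW arcs (fun _ => 1) u v = outdeg arcs u := by
  simp only [adjW, sum_boole, outdeg]
  refine congrArg _ (card_nbij' (u, ·) Prod.snd (fun v hv => by simpa using hv) ?_
    (fun v _ => rfl) ?_) <;>
  · rintro ⟨x, y⟩ h
    rw [coe_filter] at h
    obtain ⟨h, rfl⟩ := h
    simp [h]

theorem sum_adjW_midArcs_inl (u : V) :
    ∑ y, adjW (midArcs arcs) (fun _ => 1) (Sum.inl u) y = outdeg arcs u := by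
  rw [Fintype.sum_sum_type]
  simpa [adjW, midArcs, outdeg] using card_filter_attach arcs (·.1 = u)

theorem sum_adjW_midArcs_inr (e : {a // a ∈ arcs}) :
    ∑ y, adjW (midArcs arcs) (fun _ => 1) (Sum.inr e) y = 1 + outdeg arcs e.1.2 := by
  rw [Fintype.sum_sum_type]
  simpa [adjW, midArcs, outdeg, eq_comm] using (card_filter_attach arcs (·.1 = e.1.2)).symm

theorem updateRow_lapEdge_midArcs {a₀ : V × V} (h₀ : a₀ ∈ arcs) :
    updateRow (lapEdge (midArcs arcs) fun _ => 1) (Sum.inr ⟨a₀, h₀⟩)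
        (Pi.single (Sum.inr ⟨a₀, h₀⟩) 1) =
      fromBlocks (diagonal fun u => (outdeg arcs u : ℝ)) (-tailIncidence arcs)
        (-headIncidence arcs a₀)
        (midOutdegDiag arcs a₀ - headIncidence arcs a₀ * tailIncidence arcs) := by
  rw [lapEdge_eq_diagonal_sub_adjW]
  ext (u | e) (v | f)
  · simp only [updateRow_apply, Matrix.sub_apply, diagonal_apply, fromBlocks_apply₁₁,
      sum_adjW_midArcs_inl]
    simp [adjW, midArcs]
  · simp [updateRow_apply, adjW, midArcs, tailIncidence]
  all_goals
    simp only [updateRow_apply, Matrix.sub_apply, diagonal_apply, fromBlocks_apply₂₁,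
      fromBlocks_apply₂₂, sum_adjW_midArcs_inr, headIncidence_mul_tailIncidence_apply]
    by_cases he : e = ⟨a₀, h₀⟩
    · subst he
      simp [midOutdegDiag, headIncidence, diagonal_apply, Pi.single_apply, eq_comm]
    · have he' : e.1 ≠ a₀ := fun h => he (Subtype.ext h)
      simp [adjW, midArcs, headIncidence, midOutdegDiag, diagonal_apply, he, he', he'.symm, eq_comm]

theorem diagonal_sub_tailIncidence_mul_headIncidence {a₀ : V × V} (h₀ : a₀ ∈ arcs) :
    diagonal (fun u => (outdeg arcs u : ℝ)) - tailIncidence arcs * headIncidence arcs a₀ =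
      updateRow (lapEdge arcs fun _ => 1) a₀.1
        (lapEdge arcs (fun _ => 1) a₀.1 + Pi.single a₀.2 1) := by
  obtain ⟨w, x⟩ := a₀
  rw [lapEdge_eq_diagonal_sub_adjW]
  simp only [sum_adjW_one]
  ext u v
  simp only [Matrix.sub_apply, tailIncidence_mul_headIncidence_apply, updateRow_apply, adjW,
    diagonal_apply, Pi.add_apply, Pi.single_apply]
  by_cases hu : u = w
  · subst hu
    by_cases hv : v = x
    · subst hv
      simp [h₀]
    · simp [hv]
  · simp [hu]

theorem det_midOutdegDiag {a₀ : V × V} (h₀ : a₀ ∈ arcs) :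
    (midOutdegDiag arcs a₀).det = ((1 + outdeg arcs a₀.2) ^ (indeg arcs a₀.2 - 1) *
      ∏ v ∈ univ.erase a₀.2, (1 + outdeg arcs v) ^ indeg arcs v : ℕ) := by
  rw [midOutdegDiag, det_diagonal,
    Finset.prod_coe_sort arcs fun a => if a = a₀ then (1 : ℝ) else 1 + outdeg arcs a.2,
    ← mul_prod_erase arcs _ h₀, if_pos rfl, one_mul,
    prod_congr rfl fun a ha => if_neg (ne_of_mem_erase ha),
    prod_erase_snd_eq_pow_indeg h₀ fun v => (1 + outdeg arcs v : ℝ)]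
  push_cast
  rfl

end MiddleDigraphLaplacian

theorem treeCount_middle_rooted_general {V : Type*} [Fintype V] [DecidableEq V]
    (arcs : Finset (V × V))
    (estar : V × V) (hestar : estar ∈ arcs) :
    (trees (midArcs arcs) (Sum.inr ⟨estar, hestar⟩)).card =
      (trees arcs estar.1).card *
        (1 + outdeg arcs estar.2) ^ (indeg arcs estar.2 - 1) *
        ∏ v ∈ Finset.univ.erase estar.2, (1 + outdeg arcs v) ^ (indeg arcs v) := by
  have hsum : ∑ v, (lapEdge arcs (fun _ => 1) estar.1 + Pi.single estar.2 1 : V → ℝ) v =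
      ∑ v, (Pi.single estar.1 1 : V → ℝ) v := by
    simp [sum_add_distrib, sum_lapEdge_apply]
  have key : ((trees (midArcs arcs) (Sum.inr ⟨estar, hestar⟩)).card : ℝ) =
      (midOutdegDiag arcs estar).det * (trees arcs estar.1).card := by
    rw [← kappaEdgeRooted_one, kappaEdgeRooted_eq_det, updateRow_lapEdge_midArcs hestar,
      det_fromBlocks_neg_of_mul_eq (midOutdegDiag_mul_headIncidence estar),
      diagonal_sub_tailIncidence_mul_headIncidence hestar,
      det_updateRow_eq_of_sum_eq (sum_lapEdge_apply arcs _) _ hsum, ← kappaEdgeRooted_eq_det,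
      kappaEdgeRooted_one]
  rw [det_midOutdegDiag hestar, mul_comm] at key
  rw [mul_assoc]
  exact_mod_cast key

/-- **Unweighted rooted corollary.** For a fixed arc `e⋆ = (w⋆, v⋆)` of `D`, the number
of spanning trees of `M(D)` rooted at the vertex `e⋆` equals
`t(D, w⋆) · (1 + d_{v⋆})^{r_{v⋆}−1} · Π_{v ≠ v⋆} (1 + d_v)^{r_v}`. -/
theorem treeCount_middle_rooted {V : Type*} [Fintype V] [DecidableEq V]
    (arcs : Finset (V × V)) (hsimple : ∀ v : V, (v, v) ∉ arcs)
    (estar : V × V) (hestar : estar ∈ arcs) :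
    (trees (midArcs arcs) (Sum.inr ⟨estar, hestar⟩)).card =
      (trees arcs estar.1).card *
        (1 + outdeg arcs estar.2) ^ (indeg arcs estar.2 - 1) *
        ∏ v ∈ Finset.univ.erase estar.2, (1 + outdeg arcs v) ^ (indeg arcs v) :=
  treeCount_middle_rooted_general arcs estar hestar
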